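/- Matrix-valued version of Lemma 2.3 (inequality (2.6) with a general periodic matrix). Let Λ : ℝ^d → ℂ^{n×m} be Γ-periodic and measurable with ∫_Ω ‖Λ(x)‖_F² dx < ∞, where ‖·‖_F denotes the Frobenius norm of a matrix. Then for every ε > 0 and every u ∈ L²(ℝ^d; ℂ^m), the function x ↦ Λ(x/ε)(S_ε u)(x) belongs to L²(ℝ^d; ℂ^n) and ‖Λ(·/ε) S_ε u‖_{L²(ℝ^d;ℂ^n)} ≤ |Ω|^{−1/2} (∫_Ω ‖Λ(x)‖_F² dx)^{1/2} ‖u‖_{L²(ℝ^d;ℂ^m)}. -/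

import Mathlib

/-!
Pointwise, `‖Λ(x/ε) S_ε u(x)‖² ≤ ‖Λ(x/ε)‖_F² · |Ω|⁻¹ ∫_Ω ‖u(x - εz)‖² dz` by Cauchy–Schwarz, once
for the matrix and once for the average. Integrating in `x` and substituting `y = x - εz`
(Tonelli), the bound becomes `|Ω|⁻¹ ∫ ‖u(y)‖² ∫_Ω ‖Λ(y/ε + z)‖_F² dz dy`, and by periodicity the
inner integral, over the translated cell `y/ε + Ω`, equals `∫_Ω ‖Λ‖_F²`.
-/

open MeasureTheory

noncomputable section

/-- Multiplication of a Euclidean vector by a matrix, landing in Euclidean space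
(so that norms are the `ℓ²` ones). -/
def matVec {n m : ℕ} (A : Matrix (Fin n) (Fin m) ℂ) (v : EuclideanSpace ℂ (Fin m)) :
    EuclideanSpace ℂ (Fin n) :=
  (WithLp.equiv 2 (Fin n → ℂ)).symm (A.mulVec ((WithLp.equiv 2 (Fin m → ℂ)) v))

open scoped ENNReal Pointwise

section MatVec

variable {n m : ℕ}

theorem norm_matVec_sq_le (A : Matrix (Fin n) (Fin m) ℂ) (v : EuclideanSpace ℂ (Fin m)) :
    ‖matVec A v‖ ^ 2 ≤ (∑ i, ∑ j, ‖A i j‖ ^ 2) * ‖v‖ ^ 2 := by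
  rw [EuclideanSpace.norm_sq_eq, EuclideanSpace.norm_sq_eq, Finset.sum_mul]
  refine Finset.sum_le_sum fun i _ => ?_
  calc ‖matVec A v i‖ ^ 2 = ‖∑ j, A i j * v j‖ ^ 2 := rfl
    _ ≤ (∑ j, ‖A i j‖ * ‖v j‖) ^ 2 := by
        gcongr
        simpa only [norm_mul] using norm_sum_le Finset.univ fun j => A i j * v j
    _ ≤ (∑ j, ‖A i j‖ ^ 2) * ∑ j, ‖v j‖ ^ 2 := Finset.sum_mul_sq_le_sq_mul_sq _ _ _

theorem enorm_matVec_sq_le (A : Matrix (Fin n) (Fin m) ℂ) (v : EuclideanSpace ℂ (Fin m)) :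
    ‖matVec A v‖ₑ ^ 2 ≤ ENNReal.ofReal (∑ i, ∑ j, ‖A i j‖ ^ 2) * ‖v‖ₑ ^ 2 := by
  simp only [← ofReal_norm, ← ENNReal.ofReal_pow (norm_nonneg _)]
  rw [← ENNReal.ofReal_mul (by positivity)]
  exact ENNReal.ofReal_le_ofReal (norm_matVec_sq_le A v)

theorem Measurable.matVec {α : Type*} [MeasurableSpace α] {A : α → Matrix (Fin n) (Fin m) ℂ}
    {v : α → EuclideanSpace ℂ (Fin m)} (hA : ∀ i j, Measurable fun x => A x i j)
    (hv : Measurable v) : Measurable fun x => _root_.matVec (A x) (v x) := by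
  refine (WithLp.measurable_toLp 2 _).comp (measurable_pi_lambda _ fun i => ?_)
  simp only [Matrix.mulVec, dotProduct]
  refine Finset.measurable_sum _ fun j _ => (hA i j).mul ?_
  exact (measurable_pi_apply j).comp ((WithLp.measurable_ofLp 2 _).comp hv)

end MatVec

section Lattice

variable {ι E : Type*} [Fintype ι] [NormedAddCommGroup E] [NormedSpace ℝ E]
  (b : Module.Basis ι ℝ E)

theorem setOf_sum_smul_Ico_eq_fundamentalDomain :
    {x | ∃ t : ι → ℝ, (∀ i, 0 ≤ t i ∧ t i < 1) ∧ x = ∑ i, t i • b i} =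
      ZSpan.fundamentalDomain b := by
  ext x
  simp only [ZSpan.fundamentalDomain, Set.mem_Ico]
  constructor
  · rintro ⟨t, ht, rfl⟩ i
    rw [b.repr_sum_self]; exact ht i
  · exact fun h => ⟨fun i => b.repr x i, h, (b.sum_repr x).symm⟩

theorem add_eq_of_mem_span_int {β : Type*} {f : E → β}
    (hf : ∀ (ν : ι → ℤ) (x : E), f (x + ∑ i, (ν i : ℝ) • b i) = f x)
    (γ : E) (hγ : γ ∈ Submodule.span ℤ (Set.range b)) (x : E) : f (γ + x) = f x := by
  obtain ⟨ν, rfl⟩ := (Submodule.mem_span_range_iff_exists_fun ℤ).mp hγ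
  simpa [add_comm, Int.cast_smul_eq_zsmul] using hf ν x

variable [MeasurableSpace E] [BorelSpace E] [FiniteDimensional ℝ E]

theorem setLIntegral_fundamentalDomain_add_left (μ : Measure E) [μ.IsAddLeftInvariant]
    {g : E → ℝ≥0∞} (hg : ∀ (ν : ι → ℤ) (x : E), g (x + ∑ i, (ν i : ℝ) • b i) = g x) (w : E) :
    ∫⁻ z in ZSpan.fundamentalDomain b, g (w + z) ∂μ =
      ∫⁻ z in ZSpan.fundamentalDomain b, g z ∂μ := by
  have : Countable (Submodule.span ℤ (Set.range b)).toAddSubgroup :=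
    inferInstanceAs (Countable (Submodule.span ℤ (Set.range b)))
  have hfd := ZSpan.isAddFundamentalDomain' b μ
  calc ∫⁻ z in ZSpan.fundamentalDomain b, g (w + z) ∂μ
      = ∫⁻ z in w +ᵥ ZSpan.fundamentalDomain b, g z ∂μ := by
        rw [← (measurePreserving_add_left μ w).setLIntegral_comp_preimage_emb
          (measurableEmbedding_addLeft w) g (w +ᵥ ZSpan.fundamentalDomain b)]
        simp_rw [← vadd_eq_add, Set.preimage_vadd, neg_vadd_vadd]
    _ = ∫⁻ z in ZSpan.fundamentalDomain b, g z ∂μ :=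
        (hfd.vadd_of_comm w).setLIntegral_eq hfd g fun γ x => add_eq_of_mem_span_int b hg γ γ.2 x

end Lattice

section Average

variable {α F : Type*} [MeasurableSpace α] [NormedAddCommGroup F] [NormedSpace ℝ F]

theorem lintegral_sq_le_measure_univ_mul (μ : Measure α) {f : α → ℝ≥0∞}
    (hf : AEMeasurable f μ) : (∫⁻ a, f a ∂μ) ^ 2 ≤ μ Set.univ * ∫⁻ a, f a ^ 2 ∂μ := by
  have h := ENNReal.lintegral_mul_le_Lp_mul_Lq μ Real.HolderConjugate.two_two hf
    (aemeasurable_const (b := (1 : ℝ≥0∞)))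
  simp only [Pi.mul_apply, mul_one, ENNReal.one_rpow, lintegral_const, one_mul] at h
  calc (∫⁻ a, f a ∂μ) ^ 2
      ≤ ((∫⁻ a, f a ^ (2 : ℝ) ∂μ) ^ (1 / 2 : ℝ) * μ Set.univ ^ (1 / 2 : ℝ)) ^ 2 := by gcongr
    _ = μ Set.univ * ∫⁻ a, f a ^ 2 ∂μ := by
      simp only [mul_pow, ← ENNReal.rpow_mul_natCast, ENNReal.rpow_two]
      norm_num [mul_comm]

theorem enorm_smul_setIntegral_sq_le {μ : Measure α} {s : Set α} (hs₀ : μ s ≠ 0) (hs : μ s ≠ ∞)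
    {f : α → F} (hf : AEStronglyMeasurable f (μ.restrict s)) :
    ‖(μ s).toReal⁻¹ • ∫ a in s, f a ∂μ‖ₑ ^ 2 ≤ (μ s)⁻¹ * ∫⁻ a in s, ‖f a‖ₑ ^ 2 ∂μ := by
  have hinv : ‖(μ s).toReal⁻¹‖ₑ = (μ s)⁻¹ := by
    rw [← ofReal_norm, Real.norm_of_nonneg (by positivity), ENNReal.ofReal_inv_of_pos
      (ENNReal.toReal_pos hs₀ hs), ENNReal.ofReal_toReal hs]
  have hcs := lintegral_sq_le_measure_univ_mul (μ.restrict s) hf.enorm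
  rw [Measure.restrict_apply_univ] at hcs
  calc ‖(μ s).toReal⁻¹ • ∫ a in s, f a ∂μ‖ₑ ^ 2
      ≤ ((μ s)⁻¹ * ∫⁻ a in s, ‖f a‖ₑ ∂μ) ^ 2 := by
        rw [enorm_smul, hinv]
        gcongr
        exact enorm_integral_le_lintegral_enorm _
    _ ≤ (μ s)⁻¹ ^ 2 * (μ s * ∫⁻ a in s, ‖f a‖ₑ ^ 2 ∂μ) := by rw [mul_pow]; gcongr
    _ = (μ s)⁻¹ * ∫⁻ a in s, ‖f a‖ₑ ^ 2 ∂μ := by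
        rw [sq, mul_assoc, ← mul_assoc _ (μ s), ENNReal.inv_mul_cancel hs₀ hs, one_mul]

end Average

section Steklov

variable {E F : Type*} [NormedAddCommGroup E] [NormedSpace ℝ E] [MeasurableSpace E]
  [NormedAddCommGroup F] [NormedSpace ℝ F]

/-- The Steklov smoothing `S_ε f`, averaging over the cell `s`. -/
def steklov (μ : Measure E) (s : Set E) (ε : ℝ) (f : E → F) (x : E) : F :=
  (μ s).toReal⁻¹ • ∫ z in s, f (x - ε • z) ∂μ

variable [BorelSpace E] [FiniteDimensional ℝ E] {μ : Measure E} [μ.IsAddHaarMeasure] {ε : ℝ}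

theorem quasiMeasurePreserving_sub_smul (hε : ε ≠ 0) (x : E) :
    Measure.QuasiMeasurePreserving (fun z => x - ε • z) μ μ := by
  simp_rw [sub_eq_add_neg, ← neg_smul]
  exact (measurePreserving_add_left μ x).quasiMeasurePreserving.comp
    (Measure.quasiMeasurePreserving_smul μ (neg_ne_zero.mpr hε))

theorem steklov_congr_ae (hε : ε ≠ 0) {s : Set E} {f g : E → F} (hfg : f =ᵐ[μ] g) :
    steklov μ s ε f = steklov μ s ε g := by
  ext1 x
  exact congrArg _ (integral_congr_ae
    (ae_restrict_of_ae ((quasiMeasurePreserving_sub_smul hε x).ae_eq hfg)))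

theorem stronglyMeasurable_steklov (hε : ε ≠ 0) (s : Set E) {f : E → F}
    (hf : AEStronglyMeasurable f μ) : StronglyMeasurable (steklov μ s ε f) := by
  rw [steklov_congr_ae hε hf.ae_eq_mk]
  exact (StronglyMeasurable.integral_prod_right'
    (hf.stronglyMeasurable_mk.comp_measurable
      (measurable_fst.sub (measurable_snd.const_smul ε)))).fun_const_smul _

theorem enorm_steklov_sq_le (hε : ε ≠ 0) {s : Set E} (hs₀ : μ s ≠ 0) (hs : μ s ≠ ∞)
    {f : E → F} (hf : AEStronglyMeasurable f μ) (x : E) :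
    ‖steklov μ s ε f x‖ₑ ^ 2 ≤ (μ s)⁻¹ * ∫⁻ z in s, ‖f (x - ε • z)‖ₑ ^ 2 ∂μ :=
  enorm_smul_setIntegral_sq_le hs₀ hs
    (hf.comp_quasiMeasurePreserving (quasiMeasurePreserving_sub_smul hε x)).restrict

theorem lintegral_mul_setLIntegral_comp_sub_smul (hε : ε ≠ 0) {g H : E → ℝ≥0∞}
    (hg : Measurable g) (hH : Measurable H) (s : Set E)
    (hg_add : ∀ w, ∫⁻ z in s, g (w + z) ∂μ = ∫⁻ z in s, g z ∂μ) :
    ∫⁻ x, g (ε⁻¹ • x) * ∫⁻ z in s, H (x - ε • z) ∂μ ∂μ =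
      (∫⁻ z in s, g z ∂μ) * ∫⁻ y, H y ∂μ := by
  calc ∫⁻ x, g (ε⁻¹ • x) * ∫⁻ z in s, H (x - ε • z) ∂μ ∂μ
      = ∫⁻ x, ∫⁻ z in s, g (ε⁻¹ • x) * H (x - ε • z) ∂μ ∂μ :=
        lintegral_congr fun x => (lintegral_const_mul _ (by fun_prop)).symm
    _ = ∫⁻ z in s, ∫⁻ x, g (ε⁻¹ • x) * H (x - ε • z) ∂μ ∂μ :=
        lintegral_lintegral_swap (by fun_prop)
    _ = ∫⁻ z in s, ∫⁻ y, g (ε⁻¹ • y + z) * H y ∂μ ∂μ := by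
        refine lintegral_congr fun z => ?_
        rw [← lintegral_add_right_eq_self _ (ε • z)]
        simp [smul_add, smul_smul, inv_mul_cancel₀ hε]
    _ = ∫⁻ y, H y * ∫⁻ z in s, g (ε⁻¹ • y + z) ∂μ ∂μ := by
        rw [lintegral_lintegral_swap (by fun_prop)]
        refine lintegral_congr fun y => ?_
        rw [lintegral_mul_const _ (by fun_prop), mul_comm]
    _ = (∫⁻ z in s, g z ∂μ) * ∫⁻ y, H y ∂μ := by
        simp only [hg_add, mul_comm (H _)]
        exact lintegral_const_mul _ hH

theorem lintegral_mul_enorm_steklov_sq_le (hε : ε ≠ 0) {g : E → ℝ≥0∞} (hg : Measurable g)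
    {s : Set E} (hs₀ : μ s ≠ 0) (hs : μ s ≠ ∞)
    (hg_add : ∀ w, ∫⁻ z in s, g (w + z) ∂μ = ∫⁻ z in s, g z ∂μ)
    {f : E → F} (hf : AEStronglyMeasurable f μ) :
    ∫⁻ x, g (ε⁻¹ • x) * ‖steklov μ s ε f x‖ₑ ^ 2 ∂μ ≤
      (μ s)⁻¹ * (∫⁻ z in s, g z ∂μ) * ∫⁻ y, ‖f y‖ₑ ^ 2 ∂μ := by
  set f' := hf.mk f
  have hf_sq : ∫⁻ y, ‖f y‖ₑ ^ 2 ∂μ = ∫⁻ y, ‖f' y‖ₑ ^ 2 ∂μ :=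
    lintegral_congr_ae (hf.ae_eq_mk.fun_comp fun v => ‖v‖ₑ ^ 2)
  rw [steklov_congr_ae hε hf.ae_eq_mk, hf_sq]
  calc ∫⁻ x, g (ε⁻¹ • x) * ‖steklov μ s ε f' x‖ₑ ^ 2 ∂μ
      ≤ ∫⁻ x, g (ε⁻¹ • x) * ((μ s)⁻¹ * ∫⁻ z in s, ‖f' (x - ε • z)‖ₑ ^ 2 ∂μ) ∂μ :=
        lintegral_mono fun x => mul_le_mul_right
          (enorm_steklov_sq_le hε hs₀ hs hf.stronglyMeasurable_mk.aestronglyMeasurable x) _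
    _ = (μ s)⁻¹ * ∫⁻ x, g (ε⁻¹ • x) * ∫⁻ z in s, ‖f' (x - ε • z)‖ₑ ^ 2 ∂μ ∂μ := by
        rw [← lintegral_const_mul' _ _ (ENNReal.inv_ne_top.mpr hs₀)]
        simp only [mul_left_comm]
    _ = (μ s)⁻¹ * (∫⁻ z in s, g z ∂μ) * ∫⁻ y, ‖f' y‖ₑ ^ 2 ∂μ := by
        rw [lintegral_mul_setLIntegral_comp_sub_smul hε hg
          (hf.stronglyMeasurable_mk.enorm.pow_const 2) s hg_add, mul_assoc]

end Steklov

section LpTwo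

variable {α F : Type*} [MeasurableSpace α] {μ : Measure α} [NormedAddCommGroup F]

theorem integral_norm_sq_eq_toReal_lintegral {f : α → F} (hf : AEStronglyMeasurable f μ) :
    ∫ x, ‖f x‖ ^ 2 ∂μ = (∫⁻ x, ‖f x‖ₑ ^ 2 ∂μ).toReal := by
  have hf_sq : AEStronglyMeasurable (fun x => ‖f x‖ ^ 2) μ := hf.norm.pow 2
  rw [integral_eq_lintegral_of_nonneg_ae (.of_forall fun x => by positivity) hf_sq]
  simp_rw [ENNReal.ofReal_pow (norm_nonneg _), ofReal_norm]

theorem memLp_two_iff_lintegral_enorm_sq_lt_top {f : α → F} (hf : AEStronglyMeasurable f μ) :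
    MemLp f 2 μ ↔ ∫⁻ x, ‖f x‖ₑ ^ 2 ∂μ < ∞ := by
  have hf_sq : AEStronglyMeasurable (fun x => ‖f x‖ ^ 2) μ := hf.norm.pow 2
  rw [memLp_two_iff_integrable_sq_norm hf, Integrable, HasFiniteIntegral]
  simp [enorm_pow, hf_sq]

end LpTwo

theorem sqrt_toReal_le_of_le_inv_mul_mul {A c K U : ℝ≥0∞} (hc : c ≠ 0) (hK : K ≠ ∞)
    (hU : U ≠ ∞) (h : A ≤ c⁻¹ * K * U) :
    √A.toReal ≤ (√c.toReal)⁻¹ * √K.toReal * √U.toReal := by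
  calc √A.toReal ≤ √(c⁻¹ * K * U).toReal :=
        Real.sqrt_le_sqrt (ENNReal.toReal_mono (by finiteness) h)
    _ = (√c.toReal)⁻¹ * √K.toReal * √U.toReal := by
        rw [ENNReal.toReal_mul, ENNReal.toReal_mul, ENNReal.toReal_inv,
          Real.sqrt_mul (by positivity), Real.sqrt_mul (by positivity), Real.sqrt_inv]

theorem steklov_smoothing_periodic_matrix_multiplier_general
    (d m n : ℕ)
    (a : Fin d → EuclideanSpace ℝ (Fin d))
    (ha_indep : LinearIndependent ℝ a)
    (ha_span : Submodule.span ℝ (Set.range a) = ⊤)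
    (Ω : Set (EuclideanSpace ℝ (Fin d)))
    (hΩ : Ω = {x | ∃ t : Fin d → ℝ, (∀ i, 0 ≤ t i ∧ t i < 1) ∧ x = ∑ i, t i • a i})
    (Λ : EuclideanSpace ℝ (Fin d) → Matrix (Fin n) (Fin m) ℂ)
    (hΛ_meas : ∀ i j, Measurable fun x => Λ x i j)
    (hΛ_per : ∀ (ν : Fin d → ℤ) (x : EuclideanSpace ℝ (Fin d)),
      Λ (x + ∑ i, (ν i : ℝ) • a i) = Λ x)
    (hΛ_L2 : IntegrableOn (fun x => ∑ i, ∑ j, ‖Λ x i j‖ ^ 2) Ω volume)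
    (ε : ℝ) (hε : 0 < ε)
    (u : EuclideanSpace ℝ (Fin d) → EuclideanSpace ℂ (Fin m))
    (hu : MemLp u 2 volume) :
    MemLp (fun x => matVec (Λ (ε⁻¹ • x))
        ((volume Ω).toReal⁻¹ • ∫ z in Ω, u (x - ε • z))) 2 volume ∧
    Real.sqrt (∫ x, ‖matVec (Λ (ε⁻¹ • x))
        ((volume Ω).toReal⁻¹ • ∫ z in Ω, u (x - ε • z))‖ ^ 2) ≤
      (Real.sqrt ((volume Ω).toReal))⁻¹ *
      Real.sqrt (∫ x in Ω, ∑ i, ∑ j, ‖Λ x i j‖ ^ 2) *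
      Real.sqrt (∫ x, ‖u x‖ ^ 2) := by
  let b := Module.Basis.mk ha_indep ha_span.ge
  have hb : ⇑b = a := Module.Basis.coe_mk _ _
  have hΩb : Ω = ZSpan.fundamentalDomain b := by
    rw [hΩ, ← hb, setOf_sum_smul_Ico_eq_fundamentalDomain]
  have hΩ₀ : volume Ω ≠ 0 := hΩb ▸ ZSpan.measure_fundamentalDomain_ne_zero b
  have hΩ_top : volume Ω ≠ ∞ := hΩb ▸ (ZSpan.fundamentalDomain_isBounded b).measure_lt_top.ne
  set g : EuclideanSpace ℝ (Fin d) → ℝ≥0∞ := fun x => ENNReal.ofReal (∑ i, ∑ j, ‖Λ x i j‖ ^ 2)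
  have hg : Measurable g := ENNReal.measurable_ofReal.comp (Finset.measurable_sum _ fun i _ =>
    Finset.measurable_sum _ fun j _ => (hΛ_meas i j).norm.pow_const 2)
  have hg_add : ∀ w, ∫⁻ z in Ω, g (w + z) = ∫⁻ z in Ω, g z := by
    rw [hΩb]
    exact setLIntegral_fundamentalDomain_add_left b volume fun ν x => by simp only [g, hb, hΛ_per]
  have hF : Measurable fun x => matVec (Λ (ε⁻¹ • x)) (steklov volume Ω ε u x) :=
    .matVec (fun i j => (hΛ_meas i j).comp (measurable_const_smul ε⁻¹))
      (stronglyMeasurable_steklov hε.ne' Ω hu.1).measurable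
  have hbound := (lintegral_mono fun x => enorm_matVec_sq_le _ _).trans
    (lintegral_mul_enorm_steklov_sq_le hε.ne' hg hΩ₀ hΩ_top hg_add hu.1)
  have hK : ∫⁻ x in Ω, g x ≠ ∞ := hΛ_L2.lintegral_lt_top.ne
  have hU := ((memLp_two_iff_lintegral_enorm_sq_lt_top hu.1).mp hu).ne
  unfold steklov at hF hbound
  refine ⟨(memLp_two_iff_lintegral_enorm_sq_lt_top hF.aestronglyMeasurable).mpr
    (hbound.trans_lt (by finiteness)), ?_⟩
  rw [integral_norm_sq_eq_toReal_lintegral hF.aestronglyMeasurable,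
    integral_norm_sq_eq_toReal_lintegral hu.1, integral_eq_lintegral_of_nonneg_ae
      (.of_forall fun x => by positivity) hΛ_L2.aestronglyMeasurable]
  exact sqrt_toReal_le_of_le_inv_mul_mul hΩ₀ hK hU hbound

/-- **Matrix-valued version of Lemma 2.3 (inequality (2.6)).**
Let `Γ ⊂ ℝ^d` be the lattice generated by a basis `a`, with fundamental
parallelepiped `Ω`.  Let `Λ : ℝ^d → ℂ^{n×m}` be `Γ`-periodic, measurable, with
`∫_Ω ‖Λ‖_F² < ∞` (Frobenius norm).  Then for every `ε > 0` and
`u ∈ L²(ℝ^d; ℂ^m)`, the function `x ↦ Λ(x/ε) (S_ε u)(x)` belongs to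
`L²(ℝ^d; ℂ^n)` and
`‖Λ(·/ε) S_ε u‖_{L²} ≤ |Ω|^{-1/2} (∫_Ω ‖Λ‖_F²)^{1/2} ‖u‖_{L²}`, where
`(S_ε u)(x) = |Ω|⁻¹ ∫_Ω u(x - εz) dz` is the Steklov smoothing operator. -/
theorem steklov_smoothing_periodic_matrix_multiplier
    (d m n : ℕ) (hd : 0 < d) (hm : 0 < m) (hn : 0 < n)
    (a : Fin d → EuclideanSpace ℝ (Fin d))
    (ha_indep : LinearIndependent ℝ a)
    (ha_span : Submodule.span ℝ (Set.range a) = ⊤)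
    (Ω : Set (EuclideanSpace ℝ (Fin d)))
    (hΩ : Ω = {x | ∃ t : Fin d → ℝ, (∀ i, 0 ≤ t i ∧ t i < 1) ∧ x = ∑ i, t i • a i})
    (Λ : EuclideanSpace ℝ (Fin d) → Matrix (Fin n) (Fin m) ℂ)
    (hΛ_meas : ∀ i j, Measurable fun x => Λ x i j)
    (hΛ_per : ∀ (ν : Fin d → ℤ) (x : EuclideanSpace ℝ (Fin d)),
      Λ (x + ∑ i, (ν i : ℝ) • a i) = Λ x)
    (hΛ_L2 : IntegrableOn (fun x => ∑ i, ∑ j, ‖Λ x i j‖ ^ 2) Ω volume)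
    (ε : ℝ) (hε : 0 < ε)
    (u : EuclideanSpace ℝ (Fin d) → EuclideanSpace ℂ (Fin m))
    (hu : MemLp u 2 volume) :
    MemLp (fun x => matVec (Λ (ε⁻¹ • x))
        ((volume Ω).toReal⁻¹ • ∫ z in Ω, u (x - ε • z))) 2 volume ∧
    Real.sqrt (∫ x, ‖matVec (Λ (ε⁻¹ • x))
        ((volume Ω).toReal⁻¹ • ∫ z in Ω, u (x - ε • z))‖ ^ 2) ≤
      (Real.sqrt ((volume Ω).toReal))⁻¹ *
      Real.sqrt (∫ x in Ω, ∑ i, ∑ j, ‖Λ x i j‖ ^ 2) *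
      Real.sqrt (∫ x, ‖u x‖ ^ 2) :=
  steklov_smoothing_periodic_matrix_multiplier_general d m n a ha_indep ha_span Ω hΩ Λ hΛ_meas
    hΛ_per hΛ_L2 ε hε u hu
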